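/- In the modified AKV model, the orthogonal projection onto the interaction-free subspace W_D := {e_1, ψ, ψ'}^⊥ ∩ ker Z ∩ ker Z* equals P_0 + (P_2 − |Z|); equivalently, the orthogonal projection onto W_D^⊥ equals P_1 + |Z| + P_3. -/

import Mathlib

/-!
Let `Q := P₀ + P₂ − Z⋆Z` (`wdProj`). It is self-adjoint, and the relations `Z = P₃ Z P₂`,
`Z Z⋆ = P₃` give `Z Q = 0` and `Z⋆ Q = 0`. Since `Z⋆ e_{N+1}` is a nonzero multiple of `ψ` and
`Z Z⋆ e_{N+1} = e_{N+1}`, `Z⋆Z` fixes `ψ`, so `Q` kills `e₁`, `ψ`, `ψ'`; by self-adjointness `Q`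
then maps into `W_D`. Conversely, on `W_D` the operators `P₁`, `P₃ = Z Z⋆` and `Z⋆Z` vanish, so
there `Q` acts as `P₀ + P₁ + P₂ + P₃ = 1`. A self-adjoint operator with range in `W_D` that fixes
`W_D` is the orthogonal projection onto `W_D`, and the projection onto `W_D^⊥` is `1 − Q`.
-/

noncomputable section

open ContinuousLinearMap Finset
open scoped InnerProductSpace

/-- The Hilbert space ℂ^(N+M+1) of the modified AKV model. -/
abbrev AKVSpace (N M : ℕ) := EuclideanSpace ℂ (Fin (N + M + 1))

namespace AKV

variable (N M : ℕ)

/-- standard basis vector -/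
def ket (i : Fin (N + M + 1)) : AKVSpace N M := EuclideanSpace.single i 1

/-- rank-one operator |u⟩⟨v| : x ↦ ⟪v, x⟫ • u -/
def ketbra (u v : AKVSpace N M) : AKVSpace N M →L[ℂ] AKVSpace N M :=
  (innerSL ℂ v).smulRight u

/-- indices 2,…,N of the second level -/
def idx2 : Finset (Fin (N + M + 1)) := univ.filter fun i => 2 ≤ (i : ℕ) ∧ (i : ℕ) ≤ N
/-- indices N+1,…,N+M of the third level -/
def idx3 : Finset (Fin (N + M + 1)) := univ.filter fun i => N + 1 ≤ (i : ℕ)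

/-- orthogonal projection onto span{e_0} -/
def P0 : AKVSpace N M →L[ℂ] AKVSpace N M := ketbra N M (ket N M 0) (ket N M 0)
/-- orthogonal projection onto span{e_1} -/
def P1 : AKVSpace N M →L[ℂ] AKVSpace N M := ketbra N M (ket N M 1) (ket N M 1)
/-- orthogonal projection onto span{e_2,…,e_N} -/
def P2 : AKVSpace N M →L[ℂ] AKVSpace N M := ∑ i ∈ idx2 N M, ketbra N M (ket N M i) (ket N M i)
/-- orthogonal projection onto span{e_{N+1},…,e_{N+M}} -/
def P3 : AKVSpace N M →L[ℂ] AKVSpace N M := ∑ i ∈ idx3 N M, ketbra N M (ket N M i) (ket N M i)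

/-- ψ = e_2 + ⋯ + e_N -/
def psi : AKVSpace N M := ∑ i ∈ idx2 N M, ket N M i
/-- ψ' = e_{N+1} + ⋯ + e_{N+M} -/
def psi' : AKVSpace N M := ∑ i ∈ idx3 N M, ket N M i

/-- |Z| = Z⋆Z -/
def absZ (Z : AKVSpace N M →L[ℂ] AKVSpace N M) : AKVSpace N M →L[ℂ] AKVSpace N M :=
  adjoint Z * Z

/-- hypotheses on the interference operator Z of the modified AKV model -/
def IsAKVZ (hM : 1 ≤ M) (Z : AKVSpace N M →L[ℂ] AKVSpace N M) : Prop :=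
  Z = P3 N M * Z * P2 N M ∧
  Z * adjoint Z = P3 N M ∧
  Z (ket N M ⟨N - 1, by omega⟩) = ((Real.sqrt ((N : ℝ) - 1))⁻¹ : ℂ) • psi' N M ∧
  adjoint Z (ket N M ⟨N + 1, by omega⟩) = ((Real.sqrt ((N : ℝ) - 1))⁻¹ : ℂ) • psi N M

/-- the five Kraus operators -/
def kraus (Γ1m Γ1p Γ2m Γ2p Γ3m : ℝ) (Z : AKVSpace N M →L[ℂ] AKVSpace N M) :
    Fin 5 → AKVSpace N M →L[ℂ] AKVSpace N M :=
  ![((Real.sqrt (2 * Γ1m) : ℝ) : ℂ) • ketbra N M (psi N M) (ket N M 1),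
    ((Real.sqrt (2 * ((N : ℝ) - 1) * Γ2m) : ℝ) : ℂ) • Z,
    ((Real.sqrt (2 * Γ3m) : ℝ) : ℂ) • ketbra N M (ket N M 0) (psi' N M),
    ((Real.sqrt (2 * Γ1p) : ℝ) : ℂ) • ketbra N M (ket N M 1) (psi N M),
    ((Real.sqrt (2 * ((N : ℝ) - 1) * Γ2p) : ℝ) : ℂ) • adjoint Z]

/-- the effective Hamiltonian -/
def Heff (γ1m γ1p γ2m γ2p γ3m : ℝ) (Z : AKVSpace N M →L[ℂ] AKVSpace N M) :
    AKVSpace N M →L[ℂ] AKVSpace N M :=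
  (γ1p : ℂ) • ketbra N M (psi N M) (psi N M)
    - (((N : ℂ) - 1) * (γ1m : ℂ)) • ketbra N M (ket N M 1) (ket N M 1)
    + (((N : ℂ) - 1) * (γ2p : ℂ)) • P3 N M
    - (((N : ℂ) - 1) * (γ2m : ℂ)) • absZ N M Z
    - (γ3m : ℂ) • ketbra N M (psi' N M) (psi' N M)

/-- the predual GKSL generator ℒ_* of the modified AKV model -/
def Lstar (Γ1m Γ1p Γ2m Γ2p Γ3m γ1m γ1p γ2m γ2p γ3m : ℝ)
    (Z ρ : AKVSpace N M →L[ℂ] AKVSpace N M) : AKVSpace N M →L[ℂ] AKVSpace N M :=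
  -Complex.I • (Heff N M γ1m γ1p γ2m γ2p γ3m Z * ρ - ρ * Heff N M γ1m γ1p γ2m γ2p γ3m Z)
    + ∑ k : Fin 5,
        (kraus N M Γ1m Γ1p Γ2m Γ2p Γ3m Z k * ρ * adjoint (kraus N M Γ1m Γ1p Γ2m Γ2p Γ3m Z k)
          - (1 / 2 : ℂ) • (adjoint (kraus N M Γ1m Γ1p Γ2m Γ2p Γ3m Z k) *
                kraus N M Γ1m Γ1p Γ2m Γ2p Γ3m Z k * ρ
              + ρ * (adjoint (kraus N M Γ1m Γ1p Γ2m Γ2p Γ3m Z k) *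
                kraus N M Γ1m Γ1p Γ2m Γ2p Γ3m Z k)))

/-- a state: positive semidefinite with trace one -/
def IsState (ρ : AKVSpace N M →L[ℂ] AKVSpace N M) : Prop :=
  ρ.IsPositive ∧ LinearMap.trace ℂ (AKVSpace N M) ↑ρ = 1

/-- the interaction-free subspace W_D -/
def WD (Z : AKVSpace N M →L[ℂ] AKVSpace N M) : Submodule ℂ (AKVSpace N M) :=
  (Submodule.span ℂ {ket N M 1, psi N M, psi' N M})ᗮ ⊓
    LinearMap.ker (Z : AKVSpace N M →ₗ[ℂ] AKVSpace N M) ⊓ LinearMap.ker (adjoint Z : AKVSpace N M →ₗ[ℂ] AKVSpace N M)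

/-- the subspace V = {e_0, e_1, ψ, ψ', Zψ, Z⋆ψ'}^⊥ -/
def Vsub (Z : AKVSpace N M →L[ℂ] AKVSpace N M) : Submodule ℂ (AKVSpace N M) :=
  (Submodule.span ℂ
    {ket N M 0, ket N M 1, psi N M, psi' N M, Z (psi N M), adjoint Z (psi' N M)})ᗮ

/-- Im|Z| ∩ {ψ, Z⋆ψ'}^⊥ -/
def subA (Z : AKVSpace N M →L[ℂ] AKVSpace N M) : Submodule ℂ (AKVSpace N M) :=
  LinearMap.range (absZ N M Z : AKVSpace N M →ₗ[ℂ] AKVSpace N M) ⊓ (Submodule.span ℂ {psi N M, adjoint Z (psi' N M)})ᗮ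

/-- ran P₃ ∩ {ψ', Zψ}^⊥ -/
def subB (Z : AKVSpace N M →L[ℂ] AKVSpace N M) : Submodule ℂ (AKVSpace N M) :=
  LinearMap.range (P3 N M : AKVSpace N M →ₗ[ℂ] AKVSpace N M) ⊓ (Submodule.span ℂ {psi' N M, Z (psi N M)})ᗮ

/-- the orthogonal projection onto a subspace, as an operator on the whole space -/
def projOp (U : Submodule ℂ (AKVSpace N M)) : AKVSpace N M →L[ℂ] AKVSpace N M :=
  U.subtypeL ∘L U.orthogonalProjectionOnto


theorem _root_.Submodule.starProjection_eq_of_isSelfAdjoint {𝕜 E : Type*} [RCLike 𝕜]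
    [NormedAddCommGroup E] [InnerProductSpace 𝕜 E] [CompleteSpace E]
    (K : Submodule 𝕜 E) [K.HasOrthogonalProjection] {Q : E →L[𝕜] E} (hQ : IsSelfAdjoint Q)
    (hmem : ∀ x, Q x ∈ K) (hfix : ∀ w ∈ K, Q w = w) : K.starProjection = Q := by
  ext x
  refine Submodule.eq_starProjection_of_mem_of_inner_eq_zero (hmem x) fun w hw => ?_
  rw [inner_sub_left, ← isSelfAdjoint_iff'.1 hQ, adjoint_inner_left, hfix w hw, sub_self]

theorem _root_.Submodule.mem_orthogonal_span_iff {𝕜 E : Type*} [RCLike 𝕜]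
    [NormedAddCommGroup E] [InnerProductSpace 𝕜 E] {s : Set E} {y : E} :
    y ∈ (Submodule.span 𝕜 s)ᗮ ↔ ∀ u ∈ s, ⟪u, y⟫_𝕜 = 0 := by
  simp_rw [← Submodule.mem_orthogonal_singleton_iff_inner_left]
  rw [← Submodule.span_singleton_le_iff_mem, ← Submodule.isOrtho_iff_le, Submodule.isOrtho_comm,
    Submodule.isOrtho_iff_le, Submodule.span_le]
  rfl

theorem _root_.ContinuousLinearMap.adjoint_apply_apply_eq_self {𝕜 E : Type*} [RCLike 𝕜]
    [NormedAddCommGroup E] [InnerProductSpace 𝕜 E] [CompleteSpace E] {Z : E →L[𝕜] E}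
    {u v : E} {c : 𝕜} (hc : c ≠ 0) (hv : Z (adjoint Z v) = v) (hu : adjoint Z v = c • u) :
    adjoint Z (Z u) = u := by
  have hZu : Z u = c⁻¹ • v := by rw [← hv, hu, map_smul, inv_smul_smul₀ hc]
  rw [hZu, map_smul, hu, inv_smul_smul₀ hc]

variable {N M}

lemma projOp_eq_starProjection (U : Submodule ℂ (AKVSpace N M)) :
    projOp N M U = U.starProjection := rfl

variable (N M) in
def coordProj (s : Finset (Fin (N + M + 1))) : AKVSpace N M →L[ℂ] AKVSpace N M :=
  ∑ i ∈ s, ketbra N M (ket N M i) (ket N M i)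

lemma coordProj_apply (s : Finset (Fin (N + M + 1))) (x : AKVSpace N M) (j : Fin (N + M + 1)) :
    coordProj N M s x j = if j ∈ s then x j else 0 := by
  simp [coordProj, ketbra, ket, EuclideanSpace.inner_single_left, Pi.single_apply]

lemma coordProj_ket (s : Finset (Fin (N + M + 1))) (j : Fin (N + M + 1)) :
    coordProj N M s (ket N M j) = if j ∈ s then ket N M j else 0 := by
  ext k
  by_cases hj : j ∈ s <;> by_cases hk : k = j <;> simp [coordProj_apply, ket, hj, hk]

lemma coordProj_sum_ket (s t : Finset (Fin (N + M + 1))) :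
    coordProj N M s (∑ j ∈ t, ket N M j) = ∑ j ∈ s ∩ t, ket N M j := by
  simp_rw [map_sum, coordProj_ket, Finset.sum_ite_mem, Finset.inter_comm]

lemma coordProj_mul (s t : Finset (Fin (N + M + 1))) :
    coordProj N M s * coordProj N M t = coordProj N M (s ∩ t) := by
  ext x j
  simp only [mul_apply_eq_comp, coordProj_apply, Finset.mem_inter]
  split_ifs <;> tauto

lemma isSelfAdjoint_coordProj (s : Finset (Fin (N + M + 1))) :
    IsSelfAdjoint (coordProj N M s) :=
  (isPositive_sum _ fun i _ => InnerProductSpace.isPositive_rankOne_self (ket N M i)).isSelfAdjoint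

lemma val_one_of_one_le (hN : 1 ≤ N) : ((1 : Fin (N + M + 1)) : ℕ) = 1 := by
  rw [Fin.val_one', Nat.mod_eq_of_lt (by omega)]

lemma zero_notMem_idx2 : (0 : Fin (N + M + 1)) ∉ idx2 N M := by simp [idx2]

lemma zero_notMem_idx3 : (0 : Fin (N + M + 1)) ∉ idx3 N M := by simp [idx3]

lemma one_notMem_idx2 : (1 : Fin (N + M + 1)) ∉ idx2 N M := by
  simp only [idx2, Finset.mem_filter, Finset.mem_univ, true_and, not_and, not_le]
  have := Nat.mod_le 1 (N + M + 1)
  rw [Fin.val_one']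
  omega

lemma disjoint_idx2_idx3 : Disjoint (idx2 N M) (idx3 N M) := by
  rw [Finset.disjoint_left]
  simp only [idx2, idx3, Finset.mem_filter, Finset.mem_univ, true_and]
  omega

lemma P0_eq_coordProj : P0 N M = coordProj N M {0} := (Finset.sum_singleton _ _).symm

lemma P1_eq_coordProj : P1 N M = coordProj N M {1} := (Finset.sum_singleton _ _).symm

lemma P2_eq_coordProj : P2 N M = coordProj N M (idx2 N M) := rfl

lemma P3_eq_coordProj : P3 N M = coordProj N M (idx3 N M) := rfl

lemma isSelfAdjoint_P0 : IsSelfAdjoint (P0 N M) := by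
  rw [P0_eq_coordProj]
  exact isSelfAdjoint_coordProj _

lemma isSelfAdjoint_P2 : IsSelfAdjoint (P2 N M) := isSelfAdjoint_coordProj _

lemma isSelfAdjoint_P3 : IsSelfAdjoint (P3 N M) := isSelfAdjoint_coordProj _

lemma coordProj_mul_eq_zero_of_disjoint {s t : Finset (Fin (N + M + 1))} (h : Disjoint s t) :
    coordProj N M s * coordProj N M t = 0 := by
  rw [coordProj_mul, Finset.disjoint_iff_inter_eq_empty.1 h, coordProj, Finset.sum_empty]

lemma coordProj_sum_ket_eq_zero_of_disjoint {s t : Finset (Fin (N + M + 1))} (h : Disjoint s t) :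
    coordProj N M s (∑ j ∈ t, ket N M j) = 0 := by
  rw [coordProj_sum_ket, Finset.disjoint_iff_inter_eq_empty.1 h, Finset.sum_empty]

lemma P2_mul_P0 : P2 N M * P0 N M = 0 := by
  rw [P0_eq_coordProj]
  exact coordProj_mul_eq_zero_of_disjoint (Finset.disjoint_singleton_right.2 zero_notMem_idx2)

lemma P3_mul_P0 : P3 N M * P0 N M = 0 := by
  rw [P0_eq_coordProj]
  exact coordProj_mul_eq_zero_of_disjoint (Finset.disjoint_singleton_right.2 zero_notMem_idx3)

lemma P2_mul_P3 : P2 N M * P3 N M = 0 := coordProj_mul_eq_zero_of_disjoint disjoint_idx2_idx3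

lemma P3_mul_P2 : P3 N M * P2 N M = 0 := coordProj_mul_eq_zero_of_disjoint disjoint_idx2_idx3.symm

lemma P2_mul_P2 : P2 N M * P2 N M = P2 N M := by
  rw [P2_eq_coordProj, coordProj_mul, Finset.inter_self]

lemma P3_mul_P3 : P3 N M * P3 N M = P3 N M := by
  rw [P3_eq_coordProj, coordProj_mul, Finset.inter_self]

lemma P0_add_P1_add_P2_add_P3 (hN : 1 ≤ N) : P0 N M + P1 N M + P2 N M + P3 N M = 1 := by
  ext x j
  simp only [P0_eq_coordProj, P1_eq_coordProj, P2_eq_coordProj, P3_eq_coordProj, add_apply,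
    PiLp.add_apply, coordProj_apply, one_apply_eq_self, idx2, idx3, Finset.mem_singleton,
    Finset.mem_filter, Finset.mem_univ, true_and, Fin.ext_iff, Fin.val_zero, val_one_of_one_le hN]
  split_ifs <;> first | omega | simp

lemma P0_psi : P0 N M (psi N M) = 0 := by
  rw [P0_eq_coordProj]
  exact coordProj_sum_ket_eq_zero_of_disjoint (Finset.disjoint_singleton_left.2 zero_notMem_idx2)

lemma P2_psi : P2 N M (psi N M) = psi N M := by
  rw [P2_eq_coordProj, psi, coordProj_sum_ket, Finset.inter_self]

lemma P0_psi' : P0 N M (psi' N M) = 0 := by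
  rw [P0_eq_coordProj]
  exact coordProj_sum_ket_eq_zero_of_disjoint (Finset.disjoint_singleton_left.2 zero_notMem_idx3)

lemma P2_psi' : P2 N M (psi' N M) = 0 := coordProj_sum_ket_eq_zero_of_disjoint disjoint_idx2_idx3

lemma P0_ket_one (hN : 1 ≤ N) : P0 N M (ket N M 1) = 0 := by
  have h10 : (1 : Fin (N + M + 1)) ∉ ({0} : Finset _) := by
    rw [Finset.mem_singleton, Fin.ext_iff, val_one_of_one_le hN, Fin.val_zero]
    omega
  rw [P0_eq_coordProj, coordProj_ket, if_neg h10]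

lemma P2_ket_one : P2 N M (ket N M 1) = 0 := by
  rw [P2_eq_coordProj, coordProj_ket, if_neg one_notMem_idx2]

lemma P3_ket_of_le {i : Fin (N + M + 1)} (hi : N + 1 ≤ i) : P3 N M (ket N M i) = ket N M i := by
  rw [P3_eq_coordProj, coordProj_ket, if_pos (by simpa [idx3] using hi)]

section Interference

variable {Z : AKVSpace N M →L[ℂ] AKVSpace N M}

lemma mul_P2_eq_self (hZ : Z = P3 N M * Z * P2 N M) : Z * P2 N M = Z := by
  conv_lhs => rw [hZ]
  rw [mul_assoc, P2_mul_P2, ← hZ]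

lemma P3_mul_eq_self (hZ : Z = P3 N M * Z * P2 N M) : P3 N M * Z = Z := by
  conv_lhs => rw [hZ]
  rw [← mul_assoc, ← mul_assoc, P3_mul_P3, ← hZ]

lemma adjoint_mul_P3_eq_self (hZ : Z = P3 N M * Z * P2 N M) : adjoint Z * P3 N M = adjoint Z := by
  rw [← star_eq_adjoint, ← isSelfAdjoint_P3.star_eq, ← star_mul, P3_mul_eq_self hZ]

lemma mul_self_eq_zero_of_eq_P3_mul_mul_P2 (hZ : Z = P3 N M * Z * P2 N M) : Z * Z = 0 := by
  calc Z * Z = Z * P2 N M * (P3 N M * Z) := by rw [mul_P2_eq_self hZ, P3_mul_eq_self hZ]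
    _ = Z * (P2 N M * P3 N M) * Z := by simp only [mul_assoc]
    _ = 0 := by rw [P2_mul_P3, mul_zero, zero_mul]

variable (N M Z) in
def wdProj : AKVSpace N M →L[ℂ] AKVSpace N M := P0 N M + (P2 N M - absZ N M Z)

lemma isSelfAdjoint_wdProj : IsSelfAdjoint (wdProj N M Z) := by
  have habs : IsSelfAdjoint (absZ N M Z) := by
    rw [absZ, ← star_eq_adjoint]
    exact .star_mul_self Z
  -- naming the ring lets the two paths to its `Star` instance unify quickly
  exact isSelfAdjoint_P0.add (isSelfAdjoint_P2.sub (R := AKVSpace N M →L[ℂ] AKVSpace N M) habs)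

lemma mul_wdProj_eq_zero (hZ : Z = P3 N M * Z * P2 N M) (hZZ : Z * adjoint Z = P3 N M) :
    Z * wdProj N M Z = 0 := by
  have hZP0 : Z * P0 N M = 0 := by rw [← mul_P2_eq_self hZ, mul_assoc, P2_mul_P0, mul_zero]
  rw [wdProj, absZ, mul_add, mul_sub, hZP0, mul_P2_eq_self hZ, ← mul_assoc, hZZ,
    P3_mul_eq_self hZ, zero_add, sub_self]

lemma adjoint_mul_wdProj_eq_zero (hZ : Z = P3 N M * Z * P2 N M) : adjoint Z * wdProj N M Z = 0 := by
  have hP0 : adjoint Z * P0 N M = 0 := by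
    rw [← adjoint_mul_P3_eq_self hZ, mul_assoc, P3_mul_P0, mul_zero]
  have hP2 : adjoint Z * P2 N M = 0 := by
    rw [← adjoint_mul_P3_eq_self hZ, mul_assoc, P3_mul_P2, mul_zero]
  have hZZ : adjoint Z * adjoint Z = 0 := by
    rw [← star_eq_adjoint, ← star_mul, mul_self_eq_zero_of_eq_P3_mul_mul_P2 hZ, star_zero]
  rw [wdProj, absZ, mul_add, mul_sub, hP0, hP2, ← mul_assoc, hZZ, zero_mul, sub_zero, add_zero]

lemma wdProj_apply_eq_zero (hZ : Z = P3 N M * Z * P2 N M) {v : AKVSpace N M}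
    (h0 : P0 N M v = 0) (h2 : P2 N M v = 0) : wdProj N M Z v = 0 := by
  have hZv : Z v = 0 := by rw [← mul_P2_eq_self hZ, mul_apply_eq_comp, h2, map_zero]
  rw [wdProj, add_apply, sub_apply, h0, h2, absZ, mul_apply_eq_comp, hZv, map_zero, sub_zero,
    add_zero]

lemma wdProj_psi_eq_zero (habs : absZ N M Z (psi N M) = psi N M) : wdProj N M Z (psi N M) = 0 := by
  rw [wdProj, add_apply, sub_apply, P0_psi, P2_psi, habs, sub_self, add_zero]

lemma absZ_psi_eq_self (hZZ : Z * adjoint Z = P3 N M) {v : AKVSpace N M} {c : ℂ} (hc : c ≠ 0)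
    (hv : P3 N M v = v) (hadj : adjoint Z v = c • psi N M) :
    absZ N M Z (psi N M) = psi N M := by
  rw [absZ, mul_apply_eq_comp]
  exact adjoint_apply_apply_eq_self hc (by rw [← mul_apply_eq_comp, hZZ, hv]) hadj

lemma mem_WD_iff {w : AKVSpace N M} : w ∈ WD N M Z ↔
    (⟪ket N M 1, w⟫_ℂ = 0 ∧ ⟪psi N M, w⟫_ℂ = 0 ∧ ⟪psi' N M, w⟫_ℂ = 0) ∧
      Z w = 0 ∧ adjoint Z w = 0 := by
  simp [WD, Submodule.mem_orthogonal_span_iff, and_assoc]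

lemma wdProj_apply_mem_WD (hN : 1 ≤ N) (hZ : Z = P3 N M * Z * P2 N M)
    (hZZ : Z * adjoint Z = P3 N M) (habs : absZ N M Z (psi N M) = psi N M) (x : AKVSpace N M) :
    wdProj N M Z x ∈ WD N M Z := by
  have inner_wdProj_eq_zero {v : AKVSpace N M} (hv : wdProj N M Z v = 0) :
      ⟪v, wdProj N M Z x⟫_ℂ = 0 := by
    rw [← adjoint_inner_left, isSelfAdjoint_iff'.1 isSelfAdjoint_wdProj, hv, inner_zero_left]
  refine mem_WD_iff.2 ⟨⟨inner_wdProj_eq_zero ?_, inner_wdProj_eq_zero (wdProj_psi_eq_zero habs),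
    inner_wdProj_eq_zero ?_⟩, ?_, ?_⟩
  · exact wdProj_apply_eq_zero hZ (P0_ket_one hN) P2_ket_one
  · exact wdProj_apply_eq_zero hZ P0_psi' P2_psi'
  · rw [← mul_apply_eq_comp, mul_wdProj_eq_zero hZ hZZ, zero_apply]
  · rw [← mul_apply_eq_comp, adjoint_mul_wdProj_eq_zero hZ, zero_apply]

lemma wdProj_apply_of_mem_WD (hN : 1 ≤ N) (hZZ : Z * adjoint Z = P3 N M) {w : AKVSpace N M}
    (hw : w ∈ WD N M Z) : wdProj N M Z w = w := by
  obtain ⟨⟨hw1, -, -⟩, hZw, hZw'⟩ := mem_WD_iff.1 hw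
  have hP1 : P1 N M w = 0 := by
    rw [P1, ketbra, smulRight_apply, innerSL_apply_apply, hw1, zero_smul]
  have hP3 : P3 N M w = 0 := by rw [← hZZ, mul_apply_eq_comp, hZw', map_zero]
  have habs : absZ N M Z w = 0 := by rw [absZ, mul_apply_eq_comp, hZw, map_zero]
  calc wdProj N M Z w = (P0 N M + P1 N M + P2 N M + P3 N M) w := by
        rw [wdProj, add_apply, sub_apply, habs, add_apply, add_apply, add_apply, hP1, hP3]
        abel
    _ = w := by rw [P0_add_P1_add_P2_add_P3 hN, one_apply_eq_self]

end Interference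

theorem projWD_eq_general
    (N M : ℕ) (hN : 3 ≤ N) (hM1 : 1 ≤ M)
    (Z : AKVSpace N M →L[ℂ] AKVSpace N M) (hZ : IsAKVZ N M hM1 Z) :
    projOp N M (WD N M Z) = P0 N M + (P2 N M - absZ N M Z) ∧
    projOp N M ((WD N M Z)ᗮ) = P1 N M + absZ N M Z + P3 N M := by
  obtain ⟨hZ, hZZ, -, hZadj⟩ := hZ
  have hc : ((Real.sqrt ((N : ℝ) - 1))⁻¹ : ℂ) ≠ 0 := by
    simp only [ne_eq, inv_eq_zero, Complex.ofReal_eq_zero, Real.sqrt_eq_zero', tsub_le_iff_right,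
      zero_add, Nat.cast_le_one, not_le]
    omega
  have habs := absZ_psi_eq_self hZZ hc (P3_ket_of_le le_rfl) hZadj
  have hWD : projOp N M (WD N M Z) = wdProj N M Z :=
    (WD N M Z).starProjection_eq_of_isSelfAdjoint isSelfAdjoint_wdProj
      (wdProj_apply_mem_WD (by omega) hZ hZZ habs) fun _ => wdProj_apply_of_mem_WD (by omega) hZZ
  refine ⟨hWD, ?_⟩
  rw [projOp_eq_starProjection, Submodule.starProjection_orthogonal, ← projOp_eq_starProjection,
    hWD, ← one_def, ← P0_add_P1_add_P2_add_P3 (by omega), wdProj]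
  abel

/-- In the modified AKV model, the orthogonal projection onto the interaction-free subspace
`W_D` equals `P₀ + (P₂ − |Z|)`, and the orthogonal projection onto `W_D^⊥` equals
`P₁ + |Z| + P₃`. -/
theorem projWD_eq
    (N M : ℕ) (hN : 3 ≤ N) (hM1 : 1 ≤ M) (hM2 : M ≤ N - 1)
    (Z : AKVSpace N M →L[ℂ] AKVSpace N M) (hZ : IsAKVZ N M hM1 Z) :
    projOp N M (WD N M Z) = P0 N M + (P2 N M - absZ N M Z) ∧
    projOp N M ((WD N M Z)ᗮ) = P1 N M + absZ N M Z + P3 N M :=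
  projWD_eq_general N M hN hM1 Z hZ

end AKV
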